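/- arXiv:0906.5374 — 2 statements merged into one kernel-verified Lean document; each statement's English description precedes it below -/
import Mathlib

section
/- Let F be a field of characteristic ≠ 2, let D be a quaternion division algebra over F, let c ∈ D be invertible with c ∉ F·1, and let A = Cay_m(D,c) or A = Cay_r(D,c). Then the left nucleus, the middle nucleus, the right nucleus, the commuter {x ∈ A | xy = yx for all y ∈ A}, and hence the nucleus and the center of A, are all equal to F·(1,0). -/
/-!
Testing the nuclear identities of a doubling on elements `(r, 0)` and `(0, s)` turns them into
identities in `D`. For the second coordinate `v` of a nuclear element they say that `m * s`
(or `s * m`) is central for every `s`, where `m` is `v` or `σ v` up to a factor `c`; since `D` is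
a noncommutative domain this forces `m = 0`, hence `v = 0`. For the first coordinate `u` they
say that `u` or `σ u` commutes with all of `D` (using that `c` is invertible), so `u ∈ F` because
`D` is central. For the commuter, testing against `(r, 0)` gives that `u` is central and
`v σ(r) = v r`, so `v = 0` as `σ` is not the identity.
-/

open Quaternion

/-- The Cayley–Dickson doubling multiplication with the scalar `c` in the middle:
`(u,v)(u',v') = (uu' + σ(v')(cv), v'u + vσ(u'))`. -/
def caymMul {F : Type*} [Field F] {a b : F} (c : ℍ[F,a,b])
    (x y : ℍ[F,a,b] × ℍ[F,a,b]) : ℍ[F,a,b] × ℍ[F,a,b] :=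
  (x.1 * y.1 + star y.2 * (c * x.2), y.2 * x.1 + x.2 * star y.1)

/-- The Cayley–Dickson doubling multiplication with the scalar `c` on the right-hand
side: `(u,v)(u',v') = (uu' + (σ(v')v)c, v'u + vσ(u'))`. -/
def cayrMul {F : Type*} [Field F] {a b : F} (c : ℍ[F,a,b])
    (x y : ℍ[F,a,b] × ℍ[F,a,b]) : ℍ[F,a,b] × ℍ[F,a,b] :=
  (x.1 * y.1 + (star y.2 * x.2) * c, y.2 * x.1 + x.2 * star y.1)

namespace QuaternionAlgebra

variable {F : Type*} [Field F] {a b : F}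

theorem exists_mul_ne_mul (hchar : (2 : F) ≠ 0) : ∃ x y : ℍ[F,a,b], x * y ≠ y * x := by
  refine ⟨⟨0, 1, 0, 0⟩, ⟨0, 0, 1, 0⟩, fun h => hchar ?_⟩
  have := congrArg imK h
  simp only [mk_mul_mk] at this
  linear_combination this

theorem exists_star_ne (hchar : (2 : F) ≠ 0) : ∃ x : ℍ[F,a,b], star x ≠ x := by
  refine ⟨⟨0, 1, 0, 0⟩, fun h => hchar ?_⟩
  have := congrArg imI h
  simp only [star_mk] at this
  linear_combination -this

variable (b) in
theorem ne_zero_of_noZeroDivisors [NoZeroDivisors ℍ[F,a,b]] : a ≠ 0 := by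
  rintro rfl
  have : (⟨0, 1, 0, 0⟩ * ⟨0, 1, 0, 0⟩ : ℍ[F,0,b]) = 0 := by ext <;> simp
  simpa [QuaternionAlgebra.ext_iff] using mul_self_eq_zero.mp this

theorem isCentral (hchar : (2 : F) ≠ 0) (ha : a ≠ 0) : Algebra.IsCentral F ℍ[F,a,b] where
  out u hu := by
    have eq_zero {x : F} (h : x = -x) : x = 0 :=
      (mul_eq_zero.mp (by linear_combination h : (2 : F) * x = 0)).resolve_left hchar
    have hi := (Subalgebra.mem_center_iff.mp hu) ⟨0, 1, 0, 0⟩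
    have hj := (Subalgebra.mem_center_iff.mp hu) ⟨0, 0, 1, 0⟩
    have hJ : u.imJ = 0 := eq_zero (by simpa using congrArg imK hi)
    have hK : u.imK = 0 :=
      (mul_eq_zero.mp (eq_zero (by simpa using congrArg imJ hi))).resolve_left ha
    have hI : u.imI = 0 := eq_zero (by simpa using (congrArg imK hj).symm)
    exact Algebra.mem_bot.mpr ⟨u.re, by ext <;> simp [hI, hJ, hK]⟩

theorem star_algebraMap (t : F) :
    star (algebraMap F ℍ[F,a,b] t) = algebraMap F ℍ[F,a,b] t := by
  rw [coe_algebraMap]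
  exact star_coe t

end QuaternionAlgebra

section NoZeroDivisors

variable {R : Type*} [Ring R] [NoZeroDivisors R]

theorem eq_zero_of_forall_mul_mul_comm (hR : ∃ x y : R, x * y ≠ y * x) {m : R}
    (h : ∀ s p, m * s * p = p * (m * s)) : m = 0 := by
  obtain ⟨x, y, hxy⟩ := hR
  have hm : ∀ p, m * p = p * m := by simpa using h 1
  have : m * (x * y - y * x) = 0 := by
    rw [mul_sub, ← mul_assoc, h x y, ← mul_assoc, ← hm y, mul_assoc, sub_self]
  exact (mul_eq_zero.mp this).resolve_right (sub_ne_zero.mpr hxy)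

theorem eq_zero_of_forall_mul_mul_comm' (hR : ∃ x y : R, x * y ≠ y * x) {m : R}
    (h : ∀ s p, s * m * p = p * (s * m)) : m = 0 := by
  have hm : ∀ p, m * p = p * m := by simpa using h 1
  exact eq_zero_of_forall_mul_mul_comm hR fun s p => by rw [hm s, h]

theorem eq_zero_of_forall_mul_star_eq [StarRing R] (hR : ∃ r : R, star r ≠ r) {v : R}
    (h : ∀ r, v * star r = v * r) : v = 0 := by
  obtain ⟨r, hr⟩ := hR
  have : v * (star r - r) = 0 := by rw [mul_sub, h, sub_self]
  exact (mul_eq_zero.mp this).resolve_right (sub_ne_zero.mpr hr)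

end NoZeroDivisors

theorem Algebra.IsCentral.exists_algebraMap_of_forall_mul_comm {K D : Type*} [CommSemiring K]
    [Semiring D] [Algebra K D] [Algebra.IsCentral K D] {u : D} (h : ∀ w, w * u = u * w) :
    ∃ t : K, u = algebraMap K D t :=
  (Algebra.IsCentral.mem_center_iff K).mp (Subalgebra.mem_center_iff.mpr h)

open Algebra.IsCentral

section Doubling

variable {F : Type*} [Field F] {a b : F}

/-- The properties shared by `caymMul c` and `cayrMul c` that do not involve `c`. -/
structure IsDoublingMul
    (mul : ℍ[F,a,b] × ℍ[F,a,b] → ℍ[F,a,b] × ℍ[F,a,b] → ℍ[F,a,b] × ℍ[F,a,b]) : Prop where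
  mul_inl : ∀ u v r, mul (u, v) (r, 0) = (u * r, v * star r)
  inl_mul : ∀ u v r, mul (r, 0) (u, v) = (r * u, v * r)
  smul_mul : ∀ (t : F) x y, mul (t • x) y = t • mul x y
  mul_smul : ∀ (t : F) x y, mul x (t • y) = t • mul x y

theorem caymMul_isDoublingMul (c : ℍ[F,a,b]) : IsDoublingMul (caymMul c) where
  mul_inl u v r := by simp [caymMul]
  inl_mul u v r := by simp [caymMul]
  smul_mul t x y := by simp [caymMul]
  mul_smul t x y := by simp [caymMul]

theorem cayrMul_isDoublingMul (c : ℍ[F,a,b]) : IsDoublingMul (cayrMul c) where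
  mul_inl u v r := by simp [cayrMul]
  inl_mul u v r := by simp [cayrMul]
  smul_mul t x y := by simp [cayrMul]
  mul_smul t x y := by simp [cayrMul]

namespace IsDoublingMul

variable {mul : ℍ[F,a,b] × ℍ[F,a,b] → ℍ[F,a,b] × ℍ[F,a,b] → ℍ[F,a,b] × ℍ[F,a,b]}

theorem scalar_mul (h : IsDoublingMul mul) (t : F) (y : ℍ[F,a,b] × ℍ[F,a,b]) :
    mul (algebraMap F ℍ[F,a,b] t, 0) y = t • y := by
  obtain ⟨u, v⟩ := y
  rw [h.inl_mul, Algebra.algebraMap_eq_smul_one]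
  simp

theorem mul_scalar (h : IsDoublingMul mul) (t : F) (y : ℍ[F,a,b] × ℍ[F,a,b]) :
    mul y (algebraMap F ℍ[F,a,b] t, 0) = t • y := by
  obtain ⟨u, v⟩ := y
  rw [h.mul_inl, QuaternionAlgebra.star_algebraMap, Algebra.algebraMap_eq_smul_one]
  simp

variable [NoZeroDivisors ℍ[F,a,b]] [Algebra.IsCentral F ℍ[F,a,b]]

theorem commuter_subset (h : IsDoublingMul mul) (hstar : ∃ r : ℍ[F,a,b], star r ≠ r)
    {x : ℍ[F,a,b] × ℍ[F,a,b]} (hx : ∀ y, mul x y = mul y x) :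
    ∃ t : F, x = (algebraMap F ℍ[F,a,b] t, 0) := by
  obtain ⟨u, v⟩ := x
  have hr (r : ℍ[F,a,b]) : u * r = r * u ∧ v * star r = v * r := by
    simpa [h.mul_inl, h.inl_mul] using hx (r, 0)
  obtain rfl := eq_zero_of_forall_mul_star_eq hstar fun r => (hr r).2
  obtain ⟨t, rfl⟩ := exists_algebraMap_of_forall_mul_comm (K := F) fun w => (hr w).1.symm
  exact ⟨t, rfl⟩

theorem nuclei_eq_scalars (h : IsDoublingMul mul) (hstar : ∃ r : ℍ[F,a,b], star r ≠ r)
    (hL : ∀ x, (∀ y z, mul (mul x y) z = mul x (mul y z)) →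
      ∃ t : F, x = (algebraMap F ℍ[F,a,b] t, 0))
    (hM : ∀ x, (∀ y z, mul (mul y x) z = mul y (mul x z)) →
      ∃ t : F, x = (algebraMap F ℍ[F,a,b] t, 0))
    (hR : ∀ x, (∀ y z, mul (mul y z) x = mul y (mul z x)) →
      ∃ t : F, x = (algebraMap F ℍ[F,a,b] t, 0)) :
    ({x : ℍ[F,a,b] × ℍ[F,a,b] | ∀ y z, mul (mul x y) z = mul x (mul y z)}
        = {x | ∃ t : F, x = (algebraMap F ℍ[F,a,b] t, 0)}) ∧
    ({x : ℍ[F,a,b] × ℍ[F,a,b] | ∀ y z, mul (mul y x) z = mul y (mul x z)}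
        = {x | ∃ t : F, x = (algebraMap F ℍ[F,a,b] t, 0)}) ∧
    ({x : ℍ[F,a,b] × ℍ[F,a,b] | ∀ y z, mul (mul y z) x = mul y (mul z x)}
        = {x | ∃ t : F, x = (algebraMap F ℍ[F,a,b] t, 0)}) ∧
    ({x : ℍ[F,a,b] × ℍ[F,a,b] | ∀ y, mul x y = mul y x}
        = {x | ∃ t : F, x = (algebraMap F ℍ[F,a,b] t, 0)}) ∧
    ({x : ℍ[F,a,b] × ℍ[F,a,b] |
        (∀ y z, mul (mul x y) z = mul x (mul y z)) ∧
        (∀ y z, mul (mul y x) z = mul y (mul x z)) ∧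
        (∀ y z, mul (mul y z) x = mul y (mul z x))}
        = {x | ∃ t : F, x = (algebraMap F ℍ[F,a,b] t, 0)}) ∧
    ({x : ℍ[F,a,b] × ℍ[F,a,b] |
        ((∀ y z, mul (mul x y) z = mul x (mul y z)) ∧
         (∀ y z, mul (mul y x) z = mul y (mul x z)) ∧
         (∀ y z, mul (mul y z) x = mul y (mul z x))) ∧
        (∀ y, mul x y = mul y x)}
        = {x | ∃ t : F, x = (algebraMap F ℍ[F,a,b] t, 0)}) := by
  have hL' (x) : (∀ y z, mul (mul x y) z = mul x (mul y z)) ↔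
      ∃ t : F, x = (algebraMap F ℍ[F,a,b] t, 0) :=
    ⟨hL x, by rintro ⟨t, rfl⟩ y z; simp only [h.scalar_mul, h.smul_mul]⟩
  have hM' (x) : (∀ y z, mul (mul y x) z = mul y (mul x z)) ↔
      ∃ t : F, x = (algebraMap F ℍ[F,a,b] t, 0) :=
    ⟨hM x, by
      rintro ⟨t, rfl⟩ y z; simp only [h.scalar_mul, h.mul_scalar, h.smul_mul, h.mul_smul]⟩
  have hR' (x) : (∀ y z, mul (mul y z) x = mul y (mul z x)) ↔
      ∃ t : F, x = (algebraMap F ℍ[F,a,b] t, 0) :=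
    ⟨hR x, by rintro ⟨t, rfl⟩ y z; simp only [h.mul_scalar, h.mul_smul]⟩
  have hC' (x) : (∀ y, mul x y = mul y x) ↔ ∃ t : F, x = (algebraMap F ℍ[F,a,b] t, 0) :=
    ⟨h.commuter_subset hstar, by rintro ⟨t, rfl⟩ y; rw [h.scalar_mul, h.mul_scalar]⟩
  simp only [hL', hM', hR', hC', and_self]

end IsDoublingMul

variable [NoZeroDivisors ℍ[F,a,b]] [Algebra.IsCentral F ℍ[F,a,b]]

theorem caymMul_leftNucleus_subset (hR : ∃ x y : ℍ[F,a,b], x * y ≠ y * x) (c : ℍ[F,a,b]ˣ)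
    {x : ℍ[F,a,b] × ℍ[F,a,b]}
    (hx : ∀ y z, caymMul c (caymMul c x y) z = caymMul c x (caymMul c y z)) :
    ∃ t : F, x = (algebraMap F ℍ[F,a,b] t, 0) := by
  obtain ⟨u, v⟩ := x
  obtain rfl : v = 0 := by
    refine (Units.mul_right_eq_zero c).mp (eq_zero_of_forall_mul_mul_comm' hR fun s p => ?_)
    simpa [caymMul, add_mul, mul_assoc] using congrArg Prod.fst (hx (1, star s) (p, 0))
  obtain ⟨t, rfl⟩ := exists_algebraMap_of_forall_mul_comm (K := F) (u := u) fun w => by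
    simpa [caymMul, mul_assoc] using congrArg Prod.fst (hx (0, ↑c⁻¹ * w) (0, 1))
  exact ⟨t, rfl⟩

theorem caymMul_middleNucleus_subset (hR : ∃ x y : ℍ[F,a,b], x * y ≠ y * x) (c : ℍ[F,a,b]ˣ)
    {x : ℍ[F,a,b] × ℍ[F,a,b]}
    (hx : ∀ y z, caymMul c (caymMul c y x) z = caymMul c y (caymMul c x z)) :
    ∃ t : F, x = (algebraMap F ℍ[F,a,b] t, 0) := by
  obtain ⟨u, v⟩ := x
  obtain rfl : v = 0 := by
    refine star_eq_zero.mp <| (Units.mul_left_eq_zero c).mp <|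
      eq_zero_of_forall_mul_mul_comm hR fun s p => ?_
    simpa [caymMul, add_mul, mul_assoc] using congrArg Prod.fst (hx (0, s) (p, 0))
  obtain ⟨t, ht⟩ := exists_algebraMap_of_forall_mul_comm (K := F) (u := star u) fun w => by
    simpa [caymMul, mul_assoc] using congrArg Prod.fst (hx (0, ↑c⁻¹ * w) (0, 1))
  exact ⟨t, by rw [← star_star u, ht, QuaternionAlgebra.star_algebraMap]⟩

theorem caymMul_rightNucleus_subset (hR : ∃ x y : ℍ[F,a,b], x * y ≠ y * x) (c : ℍ[F,a,b]ˣ)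
    {x : ℍ[F,a,b] × ℍ[F,a,b]}
    (hx : ∀ y z, caymMul c (caymMul c y z) x = caymMul c y (caymMul c z x)) :
    ∃ t : F, x = (algebraMap F ℍ[F,a,b] t, 0) := by
  obtain ⟨u, v⟩ := x
  obtain rfl : v = 0 := by
    refine star_eq_zero.mp <| (Units.mul_left_eq_zero c).mp <|
      eq_zero_of_forall_mul_mul_comm hR fun q r => ?_
    simpa [caymMul, add_mul, mul_assoc] using congrArg Prod.fst (hx (r, 0) (0, q))
  obtain ⟨t, rfl⟩ := exists_algebraMap_of_forall_mul_comm (K := F) (u := u) fun w => by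
    simpa [caymMul, mul_assoc] using congrArg Prod.fst (hx (0, ↑c⁻¹ * w) (0, 1))
  exact ⟨t, rfl⟩

theorem cayrMul_leftNucleus_subset (hR : ∃ x y : ℍ[F,a,b], x * y ≠ y * x) (c : ℍ[F,a,b]ˣ)
    {x : ℍ[F,a,b] × ℍ[F,a,b]}
    (hx : ∀ y z, cayrMul c (cayrMul c x y) z = cayrMul c x (cayrMul c y z)) :
    ∃ t : F, x = (algebraMap F ℍ[F,a,b] t, 0) := by
  obtain ⟨u, v⟩ := x
  obtain rfl : v = 0 := by
    refine (Units.mul_left_eq_zero c).mp (eq_zero_of_forall_mul_mul_comm' hR fun s p => ?_)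
    simpa [cayrMul, add_mul, mul_assoc] using congrArg Prod.fst (hx (1, star s) (p, 0))
  obtain ⟨t, rfl⟩ := exists_algebraMap_of_forall_mul_comm (K := F) (u := u) fun w => by
    simpa [cayrMul, ← mul_assoc] using congrArg Prod.fst (hx (0, w) (0, 1))
  exact ⟨t, rfl⟩

theorem cayrMul_middleNucleus_subset (hR : ∃ x y : ℍ[F,a,b], x * y ≠ y * x) (c : ℍ[F,a,b]ˣ)
    {x : ℍ[F,a,b] × ℍ[F,a,b]}
    (hx : ∀ y z, cayrMul c (cayrMul c y x) z = cayrMul c y (cayrMul c x z)) :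
    ∃ t : F, x = (algebraMap F ℍ[F,a,b] t, 0) := by
  obtain ⟨u, v⟩ := x
  obtain rfl : v = 0 := by
    refine star_eq_zero.mp (eq_zero_of_forall_mul_mul_comm hR fun s p => ?_)
    simpa [cayrMul, add_mul, mul_assoc] using congrArg Prod.fst (hx (0, s * ↑c⁻¹) (p, 0))
  obtain ⟨t, ht⟩ := exists_algebraMap_of_forall_mul_comm (K := F) (u := star u) fun w => by
    simpa [cayrMul] using congrArg Prod.fst (hx (0, w) (0, 1))
  exact ⟨t, by rw [← star_star u, ht, QuaternionAlgebra.star_algebraMap]⟩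

theorem cayrMul_rightNucleus_subset (hR : ∃ x y : ℍ[F,a,b], x * y ≠ y * x) (c : ℍ[F,a,b]ˣ)
    {x : ℍ[F,a,b] × ℍ[F,a,b]}
    (hx : ∀ y z, cayrMul c (cayrMul c y z) x = cayrMul c y (cayrMul c z x)) :
    ∃ t : F, x = (algebraMap F ℍ[F,a,b] t, 0) := by
  obtain ⟨u, v⟩ := x
  obtain rfl : v = 0 := by
    refine star_eq_zero.mp (eq_zero_of_forall_mul_mul_comm hR fun q r => ?_)
    simpa [cayrMul, ← mul_assoc] using congrArg Prod.fst (hx (r, 0) (0, q))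
  obtain ⟨t, rfl⟩ := exists_algebraMap_of_forall_mul_comm (K := F) (u := u) fun w => by
    simpa [cayrMul, mul_assoc] using congrArg Prod.fst (hx (0, w * ↑c⁻¹) (0, 1))
  exact ⟨t, rfl⟩

end Doubling

theorem stmt_2_general {F : Type*} [Field F] (hchar : (2 : F) ≠ 0) {a b : F}
    (hD : ∀ x y : ℍ[F,a,b], x * y = 0 → x = 0 ∨ y = 0)
    (c : ℍ[F,a,b]) (hc : IsUnit c)
    (mul : (ℍ[F,a,b] × ℍ[F,a,b]) → (ℍ[F,a,b] × ℍ[F,a,b]) → ℍ[F,a,b] × ℍ[F,a,b])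
    (hmul : mul = caymMul c ∨ mul = cayrMul c) :
    ({x : ℍ[F,a,b] × ℍ[F,a,b] | ∀ y z, mul (mul x y) z = mul x (mul y z)}
        = {x | ∃ t : F, x = (algebraMap F ℍ[F,a,b] t, 0)}) ∧
    ({x : ℍ[F,a,b] × ℍ[F,a,b] | ∀ y z, mul (mul y x) z = mul y (mul x z)}
        = {x | ∃ t : F, x = (algebraMap F ℍ[F,a,b] t, 0)}) ∧
    ({x : ℍ[F,a,b] × ℍ[F,a,b] | ∀ y z, mul (mul y z) x = mul y (mul z x)}
        = {x | ∃ t : F, x = (algebraMap F ℍ[F,a,b] t, 0)}) ∧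
    ({x : ℍ[F,a,b] × ℍ[F,a,b] | ∀ y, mul x y = mul y x}
        = {x | ∃ t : F, x = (algebraMap F ℍ[F,a,b] t, 0)}) ∧
    ({x : ℍ[F,a,b] × ℍ[F,a,b] |
        (∀ y z, mul (mul x y) z = mul x (mul y z)) ∧
        (∀ y z, mul (mul y x) z = mul y (mul x z)) ∧
        (∀ y z, mul (mul y z) x = mul y (mul z x))}
        = {x | ∃ t : F, x = (algebraMap F ℍ[F,a,b] t, 0)}) ∧
    ({x : ℍ[F,a,b] × ℍ[F,a,b] |
        ((∀ y z, mul (mul x y) z = mul x (mul y z)) ∧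
         (∀ y z, mul (mul y x) z = mul y (mul x z)) ∧
         (∀ y z, mul (mul y z) x = mul y (mul z x))) ∧
        (∀ y, mul x y = mul y x)}
        = {x | ∃ t : F, x = (algebraMap F ℍ[F,a,b] t, 0)}) := by
  obtain ⟨c, rfl⟩ := hc
  have : NoZeroDivisors ℍ[F,a,b] := ⟨hD _ _⟩
  have : Algebra.IsCentral F ℍ[F,a,b] :=
    QuaternionAlgebra.isCentral hchar (QuaternionAlgebra.ne_zero_of_noZeroDivisors b)
  have hR : ∃ x y : ℍ[F,a,b], x * y ≠ y * x := QuaternionAlgebra.exists_mul_ne_mul hchar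
  have hstar : ∃ r : ℍ[F,a,b], star r ≠ r := QuaternionAlgebra.exists_star_ne hchar
  rcases hmul with rfl | rfl
  · exact (caymMul_isDoublingMul _).nuclei_eq_scalars hstar
      (fun _ => caymMul_leftNucleus_subset hR c) (fun _ => caymMul_middleNucleus_subset hR c)
      (fun _ => caymMul_rightNucleus_subset hR c)
  · exact (cayrMul_isDoublingMul _).nuclei_eq_scalars hstar
      (fun _ => cayrMul_leftNucleus_subset hR c) (fun _ => cayrMul_middleNucleus_subset hR c)
      (fun _ => cayrMul_rightNucleus_subset hR c)

/-- For a quaternion division algebra `D` over a field `F` of characteristic ≠ 2 and an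
invertible `c ∈ D` not in `F·1`, the left, middle and right nuclei, the commuter, the
nucleus and the center of `A = Cay_m(D,c)` and of `A = Cay_r(D,c)` all equal `F·(1,0)`. -/
theorem stmt_2 {F : Type*} [Field F] (hchar : (2 : F) ≠ 0) {a b : F}
    (hD : ∀ x y : ℍ[F,a,b], x * y = 0 → x = 0 ∨ y = 0)
    (c : ℍ[F,a,b]) (hc : IsUnit c)
    (hc1 : ∀ t : F, c ≠ algebraMap F ℍ[F,a,b] t)
    (mul : (ℍ[F,a,b] × ℍ[F,a,b]) → (ℍ[F,a,b] × ℍ[F,a,b]) → ℍ[F,a,b] × ℍ[F,a,b])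
    (hmul : mul = caymMul c ∨ mul = cayrMul c) :
    ({x : ℍ[F,a,b] × ℍ[F,a,b] | ∀ y z, mul (mul x y) z = mul x (mul y z)}
        = {x | ∃ t : F, x = (algebraMap F ℍ[F,a,b] t, 0)}) ∧
    ({x : ℍ[F,a,b] × ℍ[F,a,b] | ∀ y z, mul (mul y x) z = mul y (mul x z)}
        = {x | ∃ t : F, x = (algebraMap F ℍ[F,a,b] t, 0)}) ∧
    ({x : ℍ[F,a,b] × ℍ[F,a,b] | ∀ y z, mul (mul y z) x = mul y (mul z x)}
        = {x | ∃ t : F, x = (algebraMap F ℍ[F,a,b] t, 0)}) ∧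
    ({x : ℍ[F,a,b] × ℍ[F,a,b] | ∀ y, mul x y = mul y x}
        = {x | ∃ t : F, x = (algebraMap F ℍ[F,a,b] t, 0)}) ∧
    ({x : ℍ[F,a,b] × ℍ[F,a,b] |
        (∀ y z, mul (mul x y) z = mul x (mul y z)) ∧
        (∀ y z, mul (mul y x) z = mul y (mul x z)) ∧
        (∀ y z, mul (mul y z) x = mul y (mul z x))}
        = {x | ∃ t : F, x = (algebraMap F ℍ[F,a,b] t, 0)}) ∧
    ({x : ℍ[F,a,b] × ℍ[F,a,b] |
        ((∀ y z, mul (mul x y) z = mul x (mul y z)) ∧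
         (∀ y z, mul (mul y x) z = mul y (mul x z)) ∧
         (∀ y z, mul (mul y z) x = mul y (mul z x))) ∧
        (∀ y, mul x y = mul y x)}
        = {x | ∃ t : F, x = (algebraMap F ℍ[F,a,b] t, 0)}) :=
  stmt_2_general hchar hD c hc mul hmul
end

section
/- Let F be a field of characteristic ≠ 2, let D and B be quaternion division algebras over F, let c ∈ D be invertible with c ∉ F·1 and d ∈ B be invertible with d ∉ F·1. If there exists a unital F-algebra isomorphism Cay(D,c) ≅ Cay(B,d), or Cay_m(D,c) ≅ Cay_m(B,d), or Cay_r(D,c) ≅ Cay_r(B,d), then D and B are isomorphic as F-algebras. -/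
open Quaternion

/-- The Cayley–Dickson doubling multiplication on `D ⊕ D` with the scalar `c`
on the left-hand side: `(u,v)(u',v') = (uu' + c(σ(v')v), v'u + vσ(u'))`. -/
def cayMul {F : Type*} [Field F] {a b : F} (c : ℍ[F,a,b])
    (x y : ℍ[F,a,b] × ℍ[F,a,b]) : ℍ[F,a,b] × ℍ[F,a,b] :=
  (x.1 * y.1 + c * (star y.2 * x.2), y.2 * x.1 + x.2 * star y.1)

/-!
Let `D × D` carry a doubled product `(u,v)(u',v') = (uu' + T v v', v'u + vσ(u'))`.
Call `x` quadratic if `x² ∈ F x + F 1`. Since `u² = t(u) u - n(u)` in `D`, with the scalars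
`t(u) = u + σ(u)` and `n(u) = σ(u) u`, every `(u, 0)` is quadratic. If `(u, v)` with `v ≠ 0` is
quadratic, the second components force the linear coefficient to be `t(u)`, and then the first
components make `T v v` a scalar. For the three twists `T v v = c n(v)`, `σ(v) c v`, `n(v) c`
this forces `c ∈ F`, because `n(v) ≠ 0` in a division algebra. So `D × 0` is exactly the set of
quadratic elements; a unital isomorphism preserves it, and its restriction is an isomorphism
`D ≅ B`.
-/

section Quadratic

variable (F : Type*) [Semiring F] {M N : Type*} [AddCommMonoid M] [Module F M]
  [AddCommMonoid N] [Module F N]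

def IsQuadraticFor (mul : M → M → M) (one : M) (x : M) : Prop :=
  ∃ α β : F, mul x x = α • x + β • one

variable {F}

theorem LinearEquiv.isQuadraticFor_map_iff {mulM : M → M → M} {mulN : N → N → N}
    {oneM : M} {oneN : N} (G : M ≃ₗ[F] N) (h1 : G oneM = oneN)
    (hmul : ∀ x y, G (mulM x y) = mulN (G x) (G y)) (x : M) :
    IsQuadraticFor F mulN oneN (G x) ↔ IsQuadraticFor F mulM oneM x := by
  simp only [IsQuadraticFor, ← hmul, ← h1, ← map_smul, ← map_add, G.injective.eq_iff]

end Quadratic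

namespace QuaternionAlgebra

variable {F : Type*} [Field F] {c₁ c₂ c₃ : F}

theorem mul_self_eq_smul_sub_coe (u : ℍ[F,c₁,c₂,c₃]) :
    u * u = (2 * u.re + c₂ * u.imI) • u - ((star u * u).re : ℍ[F,c₁,c₂,c₃]) := by
  rw [← coe_mul_eq_smul, ← self_add_star', ← star_mul_eq_coe]
  noncomm_ring

theorem re_star_mul_self_ne_zero [NoZeroDivisors ℍ[F,c₁,c₂,c₃]] {v : ℍ[F,c₁,c₂,c₃]}
    (hv : v ≠ 0) : (star v * v).re ≠ 0 := by
  intro h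
  have : star v * v = 0 := by rw [star_mul_eq_coe, h, coe_zero]
  exact mul_ne_zero (star_ne_zero.mpr hv) hv this

theorem smul_ne_coe {c : ℍ[F,c₁,c₂,c₃]} (hc : ∀ t : F, c ≠ algebraMap F _ t) {n : F}
    (hn : n ≠ 0) (μ : F) : n • c ≠ (μ : ℍ[F,c₁,c₂,c₃]) := by
  intro h
  apply hc (n⁻¹ * μ)
  rw [coe_algebraMap, ← smul_coe, ← h, smul_smul, inv_mul_cancel₀ hn, one_smul]

variable [NoZeroDivisors ℍ[F,c₁,c₂,c₃]] {c : ℍ[F,c₁,c₂,c₃]}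
  (hc : ∀ t : F, c ≠ algebraMap F _ t) {v : ℍ[F,c₁,c₂,c₃]} (hv : v ≠ 0) (μ : F)
include hc hv

theorem mul_star_mul_self_ne_coe : c * (star v * v) ≠ (μ : ℍ[F,c₁,c₂,c₃]) := by
  rw [star_mul_eq_coe, mul_coe_eq_smul]
  exact smul_ne_coe hc (re_star_mul_self_ne_zero hv) μ

theorem star_mul_self_mul_ne_coe : star v * v * c ≠ (μ : ℍ[F,c₁,c₂,c₃]) := by
  rw [star_mul_eq_coe, coe_mul_eq_smul]
  exact smul_ne_coe hc (re_star_mul_self_ne_zero hv) μ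

theorem star_mul_mul_mul_self_ne_coe : star v * (c * v) ≠ (μ : ℍ[F,c₁,c₂,c₃]) := by
  set n := (star v * v).re
  have hn : n ≠ 0 := re_star_mul_self_ne_zero hv
  have hnorm : v * star v = (n : ℍ[F,c₁,c₂,c₃]) := by
    rw [← star_comm_self', star_mul_eq_coe]
  intro h
  -- conjugating by `v` turns `σ(v) c v = μ` into `n(v)² c = μ n(v)`
  apply smul_ne_coe hc (mul_ne_zero hn hn) (μ * n)
  calc (n * n) • c = v * (star v * (c * v)) * star v := by
        rw [← smul_smul, ← coe_mul_eq_smul, ← mul_coe_eq_smul, ← hnorm]; noncomm_ring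
    _ = (μ * n : F) := by
        rw [h, mul_coe_eq_smul, smul_mul_assoc, hnorm, ← coe_mul_eq_smul, coe_mul]

end QuaternionAlgebra

section TwistedDouble

open QuaternionAlgebra

variable {F : Type*} [Field F] {c₁ c₂ c₃ : F}

def twistedDoubleMul (T : ℍ[F,c₁,c₂,c₃] → ℍ[F,c₁,c₂,c₃] → ℍ[F,c₁,c₂,c₃])
    (x y : ℍ[F,c₁,c₂,c₃] × ℍ[F,c₁,c₂,c₃]) : ℍ[F,c₁,c₂,c₃] × ℍ[F,c₁,c₂,c₃] :=
  (x.1 * y.1 + T x.2 y.2, y.2 * x.1 + x.2 * star y.1)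

variable {T : ℍ[F,c₁,c₂,c₃] → ℍ[F,c₁,c₂,c₃] → ℍ[F,c₁,c₂,c₃]}

theorem isQuadraticFor_twistedDoubleMul_of_snd_eq_zero (hT0 : T 0 0 = 0)
    {x : ℍ[F,c₁,c₂,c₃] × ℍ[F,c₁,c₂,c₃]} (hx : x.2 = 0) :
    IsQuadraticFor F (twistedDoubleMul T) (1, 0) x := by
  obtain ⟨u, v⟩ := x
  subst hx
  refine ⟨2 * u.re + c₂ * u.imI, -(star u * u).re, ?_⟩
  refine Prod.ext ?_ (by simp [twistedDoubleMul])
  simp only [twistedDoubleMul, hT0, add_zero, neg_smul, ← sub_eq_add_neg, Prod.fst_sub,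
    Prod.smul_fst]
  rw [mul_self_eq_smul_sub_coe u, ← QuaternionAlgebra.coe_one, smul_coe, mul_one]

theorem exists_twist_eq_coe_of_isQuadraticFor {x : ℍ[F,c₁,c₂,c₃] × ℍ[F,c₁,c₂,c₃]}
    (hx : x.2 ≠ 0) (hq : IsQuadraticFor F (twistedDoubleMul T) (1, 0) x) :
    ∃ μ : F, T x.2 x.2 = μ := by
  obtain ⟨u, v⟩ := x
  obtain ⟨α, β, h⟩ := hq
  have h₁ : u * u + T v v = α • u + β • 1 := by
    simpa [twistedDoubleMul] using congrArg Prod.fst h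
  have h₂ : (2 * u.re + c₂ * u.imI) • v = α • v := by
    rw [← mul_coe_eq_smul, ← self_add_star', mul_add]
    simpa [twistedDoubleMul] using congrArg Prod.snd h
  rw [← smul_left_injective F hx h₂, mul_self_eq_smul_sub_coe u] at h₁
  refine ⟨β + (star u * u).re, ?_⟩
  rw [eq_sub_of_add_eq' h₁, coe_add, ← QuaternionAlgebra.coe_one, smul_coe, mul_one]
  abel

theorem isQuadraticFor_twistedDoubleMul_iff (hT0 : T 0 0 = 0)
    (hT : ∀ v ≠ 0, ∀ μ : F, T v v ≠ μ) (x : ℍ[F,c₁,c₂,c₃] × ℍ[F,c₁,c₂,c₃]) :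
    IsQuadraticFor F (twistedDoubleMul T) (1, 0) x ↔ x.2 = 0 := by
  refine ⟨fun hq => ?_, isQuadraticFor_twistedDoubleMul_of_snd_eq_zero hT0⟩
  by_contra hx
  obtain ⟨μ, hμ⟩ := exists_twist_eq_coe_of_isQuadraticFor hx hq
  exact hT _ hx μ hμ

theorem twistedDoubleMul_inl (hT0 : T 0 0 = 0) (u u' : ℍ[F,c₁,c₂,c₃]) :
    twistedDoubleMul T (u, 0) (u', 0) = (u * u', 0) := by
  simp [twistedDoubleMul, hT0]

theorem nonempty_algEquiv_of_twistedDoubleMul {d₁ d₂ d₃ : F}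
    (TD : ℍ[F,c₁,c₂,c₃] → ℍ[F,c₁,c₂,c₃] → ℍ[F,c₁,c₂,c₃])
    (TB : ℍ[F,d₁,d₂,d₃] → ℍ[F,d₁,d₂,d₃] → ℍ[F,d₁,d₂,d₃])
    (hTD0 : TD 0 0 = 0) (hTD : ∀ v ≠ 0, ∀ μ : F, TD v v ≠ μ)
    (hTB0 : TB 0 0 = 0) (hTB : ∀ v ≠ 0, ∀ μ : F, TB v v ≠ μ)
    (G : (ℍ[F,c₁,c₂,c₃] × ℍ[F,c₁,c₂,c₃]) ≃ₗ[F] ℍ[F,d₁,d₂,d₃] × ℍ[F,d₁,d₂,d₃])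
    (hG1 : G (1, 0) = (1, 0))
    (hGm : ∀ x y, G (twistedDoubleMul TD x y) = twistedDoubleMul TB (G x) (G y)) :
    Nonempty (ℍ[F,c₁,c₂,c₃] ≃ₐ[F] ℍ[F,d₁,d₂,d₃]) := by
  have hsnd (x) : (G x).2 = 0 ↔ x.2 = 0 := by
    rw [← isQuadraticFor_twistedDoubleMul_iff hTB0 hTB, G.isQuadraticFor_map_iff hG1 hGm,
      isQuadraticFor_twistedDoubleMul_iff hTD0 hTD]
  let φ := LinearMap.fst F _ _ ∘ₗ G.toLinearMap ∘ₗ LinearMap.inl F _ ℍ[F,c₁,c₂,c₃]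
  have hφ (u) : G (u, 0) = (φ u, 0) := Prod.ext rfl ((hsnd _).2 rfl)
  let ψ : ℍ[F,c₁,c₂,c₃] →ₐ[F] ℍ[F,d₁,d₂,d₃] := AlgHom.ofLinearMap φ
    (congrArg Prod.fst hG1)
    (fun u u' => by
      simpa only [twistedDoubleMul_inl hTD0, twistedDoubleMul_inl hTB0, hφ, Prod.mk.injEq,
        and_true] using hGm (u, 0) (u', 0))
  refine ⟨AlgEquiv.ofBijective ψ ⟨fun u u' h => ?_, fun w => ?_⟩⟩
  · simpa using G.injective ((hφ u).trans ((congrArg (·, 0) h).trans (hφ u').symm))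
  · set x := G.symm (w, 0)
    have hx : (x.1, 0) = x := Prod.ext rfl ((hsnd x).1 (by simp [x])).symm
    have h := hφ x.1
    rw [hx, LinearEquiv.apply_symm_apply] at h
    exact ⟨x.1, (congrArg Prod.fst h).symm⟩

end TwistedDouble

theorem stmt_8_general {F : Type*} [Field F] {a b a' b' : F}
    (hD : ∀ x y : ℍ[F,a,b], x * y = 0 → x = 0 ∨ y = 0)
    (hB : ∀ x y : ℍ[F,a',b'], x * y = 0 → x = 0 ∨ y = 0)
    (c : ℍ[F,a,b])
    (hc1 : ∀ t : F, c ≠ algebraMap F ℍ[F,a,b] t)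
    (d : ℍ[F,a',b'])
    (hd1 : ∀ t : F, d ≠ algebraMap F ℍ[F,a',b'] t)
    (hiso :
      (∃ G : (ℍ[F,a,b] × ℍ[F,a,b]) ≃ₗ[F] ℍ[F,a',b'] × ℍ[F,a',b'],
        G (1, 0) = (1, 0) ∧ ∀ x y, G (cayMul c x y) = cayMul d (G x) (G y)) ∨
      (∃ G : (ℍ[F,a,b] × ℍ[F,a,b]) ≃ₗ[F] ℍ[F,a',b'] × ℍ[F,a',b'],
        G (1, 0) = (1, 0) ∧ ∀ x y, G (caymMul c x y) = caymMul d (G x) (G y)) ∨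
      (∃ G : (ℍ[F,a,b] × ℍ[F,a,b]) ≃ₗ[F] ℍ[F,a',b'] × ℍ[F,a',b'],
        G (1, 0) = (1, 0) ∧ ∀ x y, G (cayrMul c x y) = cayrMul d (G x) (G y))) :
    Nonempty (ℍ[F,a,b] ≃ₐ[F] ℍ[F,a',b']) := by
  have : NoZeroDivisors ℍ[F,a,b] := ⟨hD _ _⟩
  have : NoZeroDivisors ℍ[F,a',b'] := ⟨hB _ _⟩
  rcases hiso with ⟨G, hG1, hGm⟩ | ⟨G, hG1, hGm⟩ | ⟨G, hG1, hGm⟩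
  · exact nonempty_algEquiv_of_twistedDoubleMul (fun v w => c * (star w * v))
      (fun v w => d * (star w * v))
      (by simp) (fun _ => QuaternionAlgebra.mul_star_mul_self_ne_coe hc1)
      (by simp) (fun _ => QuaternionAlgebra.mul_star_mul_self_ne_coe hd1) G hG1 hGm
  · exact nonempty_algEquiv_of_twistedDoubleMul (fun v w => star w * (c * v))
      (fun v w => star w * (d * v))
      (by simp) (fun _ => QuaternionAlgebra.star_mul_mul_mul_self_ne_coe hc1)
      (by simp) (fun _ => QuaternionAlgebra.star_mul_mul_mul_self_ne_coe hd1) G hG1 hGm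
  · exact nonempty_algEquiv_of_twistedDoubleMul (fun v w => star w * v * c)
      (fun v w => star w * v * d)
      (by simp) (fun _ => QuaternionAlgebra.star_mul_self_mul_ne_coe hc1)
      (by simp) (fun _ => QuaternionAlgebra.star_mul_self_mul_ne_coe hd1) G hG1 hGm

/-- If `D`, `B` are quaternion division algebras over a field `F` of characteristic ≠ 2,
`c ∈ D`, `d ∈ B` invertible and not in `F·1`, and `Cay(D,c) ≅ Cay(B,d)`, or
`Cay_m(D,c) ≅ Cay_m(B,d)`, or `Cay_r(D,c) ≅ Cay_r(B,d)` as unital `F`-algebras,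
then `D ≅ B` as `F`-algebras. -/
theorem stmt_8 {F : Type*} [Field F] (hchar : (2 : F) ≠ 0) {a b a' b' : F}
    (hD : ∀ x y : ℍ[F,a,b], x * y = 0 → x = 0 ∨ y = 0)
    (hB : ∀ x y : ℍ[F,a',b'], x * y = 0 → x = 0 ∨ y = 0)
    (c : ℍ[F,a,b]) (hc : IsUnit c)
    (hc1 : ∀ t : F, c ≠ algebraMap F ℍ[F,a,b] t)
    (d : ℍ[F,a',b']) (hd : IsUnit d)
    (hd1 : ∀ t : F, d ≠ algebraMap F ℍ[F,a',b'] t)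
    (hiso :
      (∃ G : (ℍ[F,a,b] × ℍ[F,a,b]) ≃ₗ[F] ℍ[F,a',b'] × ℍ[F,a',b'],
        G (1, 0) = (1, 0) ∧ ∀ x y, G (cayMul c x y) = cayMul d (G x) (G y)) ∨
      (∃ G : (ℍ[F,a,b] × ℍ[F,a,b]) ≃ₗ[F] ℍ[F,a',b'] × ℍ[F,a',b'],
        G (1, 0) = (1, 0) ∧ ∀ x y, G (caymMul c x y) = caymMul d (G x) (G y)) ∨
      (∃ G : (ℍ[F,a,b] × ℍ[F,a,b]) ≃ₗ[F] ℍ[F,a',b'] × ℍ[F,a',b'],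
        G (1, 0) = (1, 0) ∧ ∀ x y, G (cayrMul c x y) = cayrMul d (G x) (G y))) :
    Nonempty (ℍ[F,a,b] ≃ₐ[F] ℍ[F,a',b']) :=
  stmt_8_general hD hB c hc1 d hd1 hiso
end
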